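/- arXiv:math/0312200 — 5 statements merged into one kernel-verified Lean document; each statement's English description precedes it below -/
import Mathlib

section
/- Let V ∈ C^∞(ℝ) and F(z,x) = Π_{j=1}^n (z - μ_j(x)) be a monic degree-n polynomial in z satisfying (1/2)F_xx F - (1/4)F_x² - (V - z)F² = R(z), where R(z) = Π_{m=0}^{2n}(z - E_m) is monic of degree 2n+1. Then comparing the coefficient of z^{2n} yields the trace formula V = Σ_{m=0}^{2n} E_m - 2 Σ_{j=1}^n μ_j. -/
open Polynomial

private lemma kdv_aux_smooth (μ : ℕ → ℝ → ℂ) (hμ : ∀ j, ContDiff ℝ (⊤ : ℕ∞) (μ j)) (s : Finset ℕ) :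
    ∀ k, ContDiff ℝ (⊤ : ℕ∞) (fun x => (∏ j ∈ s, (X - C (μ j x))).coeff k) := by
  classical
  induction s using Finset.induction_on with
  | empty => intro k; simpa using contDiff_const
  | insert a s ha ih =>
    intro k
    have hrw : (fun x => (∏ j ∈ insert a s, (X - C (μ j x))).coeff k)
        = fun x => (X * ∏ j ∈ s, (X - C (μ j x))).coeff k
            - μ a x * (∏ j ∈ s, (X - C (μ j x))).coeff k := by
      funext x
      rw [Finset.prod_insert ha, sub_mul, coeff_sub, coeff_C_mul]
    rw [hrw]
    cases k with
    | zero =>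
      simp only [coeff_X_mul_zero]
      exact (contDiff_const.sub ((hμ a).mul (ih 0)))
    | succ k =>
      simp only [coeff_X_mul]
      exact (ih k).sub ((hμ a).mul (ih (k + 1)))

/-- If `F(z,x) = ∏ⱼ (z - μⱼ(x))` satisfies
`(1/2)F_xx F - (1/4)F_x² - (V - z)F² = ∏ₘ (z - Eₘ)`, then the trace formula
`V = ∑ₘ Eₘ - 2 ∑ⱼ μⱼ` holds. -/
theorem kdv_trace_formula (n : ℕ) (V : ℝ → ℂ) (hV : ContDiff ℝ (⊤ : ℕ∞) V)
    (μ : ℕ → ℝ → ℂ) (hμ : ∀ j, ContDiff ℝ (⊤ : ℕ∞) (μ j))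
    (E : ℕ → ℂ)
    (F : ℂ → ℝ → ℂ)
    (hF : ∀ z x, F z x = ∏ j ∈ Finset.range n, (z - μ j x))
    (heq : ∀ (z : ℂ) (x : ℝ),
      (1/2) * deriv (deriv (F z)) x * F z x - (1/4) * (deriv (F z) x) ^ 2
        - (V x - z) * (F z x) ^ 2 = ∏ m ∈ Finset.range (2 * n + 1), (z - E m)) :
    ∀ x, V x = (∑ m ∈ Finset.range (2 * n + 1), E m)
      - 2 * ∑ j ∈ Finset.range n, μ j x := by
  classical
  -- coefficient functions
  set p : ℝ → ℂ[X] := fun t => ∏ j ∈ Finset.range n, (X - C (μ j t)) with hp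
  set c : ℕ → ℝ → ℂ := fun k t => (p t).coeff k with hcdef
  have hcs : ∀ k, ContDiff ℝ (⊤ : ℕ∞) (c k) := fun k => kdv_aux_smooth μ hμ (Finset.range n) k
  have hmon : ∀ t, (p t).Monic := fun t =>
    monic_prod_of_monic _ _ (fun j _ => monic_X_sub_C _)
  have hdeg : ∀ t, (p t).natDegree = n := by
    intro t
    rw [hp]
    rw [natDegree_prod_of_monic _ _ (fun j _ => monic_X_sub_C _)]
    simp [natDegree_X_sub_C]
  -- F as a sum
  have hFc : ∀ (z : ℂ) (t : ℝ), F z t = ∑ k ∈ Finset.range (n + 1), c k t * z ^ k := by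
    intro z t
    have he : F z t = (p t).eval z := by
      rw [hF, hp]; simp [eval_prod]
    rw [he, eval_eq_sum_range' (by rw [hdeg t]; exact Nat.lt_succ_self n) z]
  set d : ℕ → ℝ → ℂ := fun k => deriv (c k) with hddef
  set e : ℕ → ℝ → ℂ := fun k => deriv (d k) with hedef
  have hds : ∀ k, ContDiff ℝ (⊤ : ℕ∞) (d k) := by
    intro k
    exact (contDiff_succ_iff_deriv.mp (by simpa using hcs k)).2.2
  -- generic derivative-of-sum lemma
  have hderiv : ∀ (g : ℕ → ℝ → ℂ), (∀ k, Differentiable ℝ (g k)) → ∀ (z : ℂ) (t : ℝ),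
      deriv (fun y => ∑ k ∈ Finset.range (n + 1), g k y * z ^ k) t
        = ∑ k ∈ Finset.range (n + 1), deriv (g k) t * z ^ k := by
    intro g hg z t
    rw [deriv_fun_sum (fun k _ => (hg k t).mul_const _)]
    exact Finset.sum_congr rfl fun k _ => deriv_mul_const (hg k t) _
  have hF1 : ∀ (z : ℂ) (t : ℝ),
      deriv (F z) t = ∑ k ∈ Finset.range (n + 1), d k t * z ^ k := by
    intro z t
    have : F z = fun y => ∑ k ∈ Finset.range (n + 1), c k y * z ^ k := funext (hFc z)
    rw [this]
    exact hderiv c (fun k => (hcs k).differentiable (by simp)) z t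
  have hF2 : ∀ (z : ℂ) (t : ℝ),
      deriv (deriv (F z)) t = ∑ k ∈ Finset.range (n + 1), e k t * z ^ k := by
    intro z t
    have : deriv (F z) = fun y => ∑ k ∈ Finset.range (n + 1), d k y * z ^ k :=
      funext (hF1 z)
    rw [this]
    exact hderiv d (fun k => (hds k).differentiable (by simp)) z t
  -- top coefficients vanish after differentiating
  have hcn : c n = fun _ => (1 : ℂ) := by
    funext t
    have := (hmon t).coeff_natDegree
    rw [hdeg t] at this
    exact this
  have hdn : d n = fun _ => (0 : ℂ) := by
    funext t; rw [hddef]; simp [hcn]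
  have hen : ∀ t, e n t = 0 := by
    intro t; rw [hedef]; simp [hdn]
  intro x
  -- polynomials at the point x
  set P : ℂ[X] := p x with hP
  set Q : ℂ[X] := ∑ k ∈ Finset.range (n + 1), C (d k x) * X ^ k with hQ
  set S : ℂ[X] := ∑ k ∈ Finset.range (n + 1), C (e k x) * X ^ k with hS
  set Rp : ℂ[X] := ∏ m ∈ Finset.range (2 * n + 1), (X - C (E m)) with hRp
  have hcoeff : ∀ (a : ℕ → ℂ) (k : ℕ),
      (∑ i ∈ Finset.range (n + 1), C (a i) * X ^ i).coeff k
        = if k ≤ n then a k else 0 := by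
    intro a k
    rw [finset_sum_coeff]
    simp [coeff_C_mul, coeff_X_pow, Finset.sum_ite_eq, Nat.lt_succ_iff]
  have hevQ : ∀ z : ℂ, Q.eval z = deriv (F z) x := by
    intro z; rw [hQ, hF1]; simp [eval_finset_sum]
  have hevS : ∀ z : ℂ, S.eval z = deriv (deriv (F z)) x := by
    intro z; rw [hS, hF2]; simp [eval_finset_sum]
  have hevP : ∀ z : ℂ, P.eval z = F z x := by
    intro z; rw [hP, hp, hF]; simp [eval_prod]
  -- polynomial identity
  have hTR : C (1/2 : ℂ) * S * P - C (1/4 : ℂ) * Q ^ 2 - (C (V x) - X) * P ^ 2 = Rp := by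
    apply Polynomial.funext
    intro z
    simp only [eval_sub, eval_mul, eval_pow, eval_C, eval_X]
    rw [hevP, hevQ, hevS, hRp]
    rw [heq z x]
    simp [eval_prod]
  -- coefficient bounds
  have hQc : ∀ i, n ≤ i → Q.coeff i = 0 := by
    intro i hi
    rw [hQ, hcoeff]
    rcases eq_or_lt_of_le hi with h | h
    · simp [← h, hdn]
    · simp [Nat.not_le.mpr h]
  have hSc : ∀ i, n ≤ i → S.coeff i = 0 := by
    intro i hi
    rw [hS, hcoeff]
    rcases eq_or_lt_of_le hi with h | h
    · simp [← h, hen]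
    · simp [Nat.not_le.mpr h]
  have hPc : ∀ j, n < j → P.coeff j = 0 := by
    intro j hj
    apply coeff_eq_zero_of_natDegree_lt
    rw [hP, hdeg x]; exact hj
  have key0 : ∀ (A B : ℂ[X]), (∀ i, n ≤ i → A.coeff i = 0) → (∀ j, n < j → B.coeff j = 0) →
      (A * B).coeff (2 * n) = 0 := by
    intro A B hA hB
    rw [coeff_mul]
    apply Finset.sum_eq_zero
    rintro ⟨i, j⟩ hij
    rw [Finset.HasAntidiagonal.mem_antidiagonal] at hij
    rcases lt_or_ge i n with h | h
    · have : n < j := by omega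
      simp [hB j this]
    · simp [hA i h]
  have h1 : (C (1/2 : ℂ) * S * P).coeff (2 * n) = 0 := by
    apply key0 _ _ _ hPc
    intro i hi
    rw [coeff_C_mul, hSc i hi, mul_zero]
  have h2 : (C (1/4 : ℂ) * Q ^ 2).coeff (2 * n) = 0 := by
    rw [sq, ← mul_assoc]
    apply key0
    · intro i hi
      rw [coeff_C_mul, hQc i hi, mul_zero]
    · intro j hj
      exact hQc j (le_of_lt hj)
  -- P^2 facts
  have hP2mon : (P ^ 2).Monic := (hmon x).pow 2
  have hP2deg : (P ^ 2).natDegree = 2 * n := by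
    rw [(hmon x).natDegree_pow, hdeg x, mul_comm]
  have hP2top : (P ^ 2).coeff (2 * n) = 1 := by
    have := hP2mon.coeff_natDegree
    rwa [hP2deg] at this
  have hRc : Rp.coeff (2 * n) = -∑ m ∈ Finset.range (2 * n + 1), E m := by
    have := prod_X_sub_C_coeff_card_pred (Finset.range (2 * n + 1)) E (by simp)
    simpa using this
  -- take coefficient 2n of the identity
  have hco := congrArg (fun q : ℂ[X] => q.coeff (2 * n)) hTR
  simp only [coeff_sub] at hco
  rw [h1, h2, hRc] at hco
  have h3 : ((C (V x) - X) * P ^ 2).coeff (2 * n)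
      = V x + 2 * ∑ j ∈ Finset.range n, μ j x := by
    rw [sub_mul, coeff_sub, coeff_C_mul, hP2top, mul_one]
    rcases Nat.eq_zero_or_pos n with hn | hn
    · subst hn
      simp
    · obtain ⟨m, hm⟩ : ∃ m, 2 * n = m + 1 := ⟨2 * n - 1, by omega⟩
      rw [hm, coeff_X_mul]
      have hnext : (P ^ 2).coeff m = -(2 * ∑ j ∈ Finset.range n, μ j x) := by
        have h4 : (P ^ 2).coeff m = (P ^ 2).nextCoeff := by
          rw [nextCoeff_of_natDegree_pos (by rw [hP2deg]; omega), hP2deg, hm]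
          simp
        rw [h4, sq, Monic.nextCoeff_mul (hmon x) (hmon x)]
        have h5 : P.nextCoeff = -∑ j ∈ Finset.range n, μ j x := by
          rw [hP, hp]
          exact prod_X_sub_C_nextCoeff _
        rw [h5]; ring
      rw [hnext]; ring
  rw [h3] at hco
  -- hco : 0 - 0 - (V x + 2 * ∑ μ) = -∑ E
  have : -(V x + 2 * ∑ j ∈ Finset.range n, μ j x)
      = -∑ m ∈ Finset.range (2 * n + 1), E m := by
    linear_combination hco
  linear_combination -this
end

section
/- Let U ∈ L²((-∞,R]) and V ∈ L²([R,∞)) for all R ∈ ℝ, and suppose sup_{r∈ℝ} (∫_{-∞}^r |U(x)|² dx)(∫_r^∞ |V(x)|² dx) < ∞. Then there exists a finite constant C > 0 such that for all f ∈ L²(ℝ), ∫_ℝ |U(x) ∫_x^∞ V(x')f(x') dx'|² dx ≤ C ∫_ℝ |f(x)|² dx. -/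
/-!
Write `A r = ∫_{(-∞, r]} |U|²` and `B r = ∫_{[r, ∞)} |V|²`, so that `A * B ≤ M`.
Cauchy–Schwarz with the weight `B^{1/2}` gives
`|∫_{[x,∞)} V f|² ≤ (∫_{[x,∞)} |V|² B^{-1/2}) (∫_{[x,∞)} |f|² B^{1/2})`, and the first factor is
at most `4 B(x)^{1/2}`: a dyadic substitute for `∫ dB / √B = 2 √B`, valid for an arbitrary measure.
Integrating against `|U|²` and exchanging the order of integration leaves
`∫ |f y|² B(y)^{1/2} ∫_{(-∞, y]} |U|² B^{1/2}`; there `B^{1/2} ≤ M^{1/2} A^{-1/2}`, and the mirror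
estimate `∫_{(-∞, y]} |U|² A^{-1/2} ≤ 4 A(y)^{1/2}` bounds the whole by `16 M ∫ |f|²`.
-/

open MeasureTheory Set Filter Topology
open scoped ENNReal

namespace ENNReal

theorem rpow_two_inv_sq (x : ℝ≥0∞) : (x ^ (2⁻¹ : ℝ)) ^ 2 = x := by
  simpa using rpow_inv_natCast_pow two_ne_zero x

theorem sq_rpow_two_inv (x : ℝ≥0∞) : (x ^ 2) ^ (2⁻¹ : ℝ) = x := by
  simpa using pow_rpow_inv_natCast two_ne_zero x

theorem exists_sq_mul_inv_two_pow_lt_le {s b : ℝ≥0∞} (hs : s ≠ ∞) (hb0 : b ≠ 0)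
    (hbs : b ≤ s ^ 2) : ∃ j : ℕ, (s * 2⁻¹ ^ (j + 1)) ^ 2 < b ∧ b ≤ (s * 2⁻¹ ^ j) ^ 2 := by
  have hlim : Tendsto (fun k : ℕ => (s * 2⁻¹ ^ k) ^ 2) atTop (𝓝 0) := by
    have h2 := tendsto_pow_atTop_nhds_zero_of_lt_one (by norm_num : (2⁻¹ : ℝ≥0∞) < 1)
    simpa using ENNReal.Tendsto.pow (ENNReal.Tendsto.const_mul h2 (Or.inr hs)) (n := 2)
  obtain ⟨j, hj_le, hj_lt⟩ := Nat.exists_not_and_succ_of_not_zero_of_exists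
    (p := fun k => (s * 2⁻¹ ^ k) ^ 2 < b) (by simpa using hbs)
    (hlim.eventually (gt_mem_nhds (pos_iff_ne_zero.mpr hb0))).exists
  exact ⟨j, hj_lt, not_lt.mp hj_le⟩

end ENNReal

section TailMeasure

variable {α : Type*} [ConditionallyCompleteLinearOrder α] [TopologicalSpace α] [OrderTopology α]
  [FirstCountableTopology α] [MeasurableSpace α]

theorem measure_setOf_measure_Ici_le (μ : Measure α) (x : α) (c : ℝ≥0∞) :
    μ {y | x ≤ y ∧ μ (Ici y) ≤ c} ≤ c := by
  set S := {y | x ≤ y ∧ μ (Ici y) ≤ c}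
  rcases S.eq_empty_or_nonempty with hS | hS
  · simp [hS]
  have hbdd : BddBelow S := ⟨x, fun y hy => hy.1⟩
  by_cases hinf : sInf S ∈ S
  · exact (measure_mono fun y hy => csInf_le hbdd hy).trans hinf.2
  -- `S` is an upper set not containing its infimum, so it is exhausted by `Ici (u n)`
  obtain ⟨u, hu_anti, hu_lim, hu_mem⟩ := exists_seq_tendsto_sInf hS hbdd
  have hcover : S ⊆ ⋃ n, Ici (u n) := fun y hy => by
    have hlt : sInf S < y := (csInf_le hbdd hy).lt_of_ne fun h => hinf (h ▸ hy)
    obtain ⟨n, hn⟩ := (hu_lim.eventually (gt_mem_nhds hlt)).exists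
    exact mem_iUnion.mpr ⟨n, hn.le⟩
  calc μ S ≤ μ (⋃ n, Ici (u n)) := measure_mono hcover
    _ = ⨆ n, μ (Ici (u n)) :=
      Monotone.measure_iUnion fun m n hmn => Ici_subset_Ici.mpr (hu_anti hmn)
    _ ≤ c := iSup_le fun n => (hu_mem n).2

variable [BorelSpace α]

theorem ae_restrict_Ici_measure_Ici_ne_zero (μ : Measure α) (x : α) :
    ∀ᵐ y ∂μ.restrict (Ici x), μ (Ici y) ≠ 0 := by
  rw [ae_restrict_iff' measurableSet_Ici, ae_iff]
  simpa [nonpos_iff_eq_zero] using measure_setOf_measure_Ici_le μ x 0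

theorem setLIntegral_Ici_inv_rpow_measure_Ici_le (μ : Measure α) (x : α) :
    ∫⁻ y in Ici x, (μ (Ici y) ^ (2⁻¹ : ℝ))⁻¹ ∂μ ≤ 4 * μ (Ici x) ^ (2⁻¹ : ℝ) := by
  set s := μ (Ici x) ^ (2⁻¹ : ℝ)
  have hB : Antitone fun y => μ (Ici y) := fun a b hab => measure_mono (Ici_subset_Ici.mpr hab)
  rcases eq_or_ne s ∞ with hs_top | hs_top
  · simp [hs_top]
  rcases eq_or_ne s 0 with hs0 | hs0
  · have : μ (Ici x) = 0 := by norm_num [s] at hs0; exact hs0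
    simp [Measure.restrict_eq_zero.mpr this]
  -- On `S j \ S (j + 1)` the integrand is at most `2 ^ (j + 1) / s`, while `μ (S j) ≤ s² / 4 ^ j`.
  set S : ℕ → Set α := fun i => {y | x ≤ y ∧ μ (Ici y) ≤ (s * 2⁻¹ ^ i) ^ 2}
  have hS : ∀ i, MeasurableSet (S i) := fun i =>
    measurableSet_Ici.inter (hB.measurable measurableSet_Iic)
  have hpt : ∀ᵐ y ∂μ.restrict (Ici x), (μ (Ici y) ^ (2⁻¹ : ℝ))⁻¹ ≤
      ∑' i, (S i).indicator (fun _ => 2 ^ (i + 1) * s⁻¹) y := by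
    filter_upwards [ae_restrict_Ici_measure_Ici_ne_zero μ x, ae_restrict_mem measurableSet_Ici]
      with y hy0 hyx
    obtain ⟨j, hj_lt, hj_le⟩ := ENNReal.exists_sq_mul_inv_two_pow_lt_le hs_top hy0
      (by rw [ENNReal.rpow_two_inv_sq]; exact hB hyx)
    calc _ ≤ (s * 2⁻¹ ^ (j + 1))⁻¹ := ENNReal.inv_le_inv.mpr <| by
          simpa [ENNReal.sq_rpow_two_inv] using
            ENNReal.rpow_le_rpow hj_lt.le (by norm_num : (0 : ℝ) ≤ 2⁻¹)
      _ = 2 ^ (j + 1) * s⁻¹ := by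
          rw [ENNReal.mul_inv (Or.inr (by simp)) (Or.inl hs_top), ENNReal.inv_pow, inv_inv,
            mul_comm]
      _ = (S j).indicator (fun _ => 2 ^ (j + 1) * s⁻¹) y := by
          rw [indicator_of_mem (show y ∈ S j from ⟨hyx, hj_le⟩)]
      _ ≤ _ := ENNReal.le_tsum j
  calc ∫⁻ y in Ici x, (μ (Ici y) ^ (2⁻¹ : ℝ))⁻¹ ∂μ
      ≤ ∫⁻ y, ∑' i, (S i).indicator (fun _ => 2 ^ (i + 1) * s⁻¹) y ∂μ :=
        (lintegral_mono_ae hpt).trans (setLIntegral_le_lintegral _ _)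
    _ = ∑' i, 2 ^ (i + 1) * s⁻¹ * μ (S i) := by
      rw [lintegral_tsum fun i => (measurable_const.indicator (hS i)).aemeasurable]
      exact tsum_congr fun i => lintegral_indicator_const (hS i) _
    _ ≤ ∑' i, 2 ^ (i + 1) * s⁻¹ * (s * 2⁻¹ ^ i) ^ 2 :=
      ENNReal.tsum_le_tsum fun i => by gcongr; exact measure_setOf_measure_Ici_le μ x _
    _ = ∑' i : ℕ, 2 * s * 2⁻¹ ^ i := tsum_congr fun i => by
      calc 2 ^ (i + 1) * s⁻¹ * (s * 2⁻¹ ^ i) ^ 2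
          = 2 * (s⁻¹ * s) * s * (2 * 2⁻¹) ^ i * 2⁻¹ ^ i := by ring
        _ = 2 * s * 2⁻¹ ^ i := by
          rw [ENNReal.inv_mul_cancel hs0 hs_top,
            ENNReal.mul_inv_cancel two_ne_zero ENNReal.ofNat_ne_top]
          ring
    _ = 4 * s := by
      rw [ENNReal.tsum_mul_left, ENNReal.tsum_geometric, ENNReal.one_sub_inv_two, inv_inv]
      ring

variable (ν : Measure α) {g : α → ℝ≥0∞}

theorem ae_restrict_Ici_eq_zero_of_setLIntegral_Ici_eq_zero (hg : Measurable g) (x : α) :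
    ∀ᵐ y ∂ν.restrict (Ici x), ∫⁻ z in Ici y, g z ∂ν = 0 → g y = 0 := by
  have h := ae_restrict_Ici_measure_Ici_ne_zero (ν.withDensity g) x
  rw [restrict_withDensity measurableSet_Ici, ae_withDensity_iff hg] at h
  filter_upwards [h] with y hy hy0
  by_contra hgy
  exact hy hgy (by rwa [withDensity_apply _ measurableSet_Ici])

theorem setLIntegral_Ici_div_rpow_le (hg : Measurable g) (x : α) :
    ∫⁻ y in Ici x, g y / (∫⁻ z in Ici y, g z ∂ν) ^ (2⁻¹ : ℝ) ∂ν ≤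
      4 * (∫⁻ z in Ici x, g z ∂ν) ^ (2⁻¹ : ℝ) := by
  have hB : Antitone fun y => ∫⁻ z in Ici y, g z ∂ν := fun a b hab =>
    lintegral_mono_set (Ici_subset_Ici.mpr hab)
  have h := setLIntegral_Ici_inv_rpow_measure_Ici_le (ν.withDensity g) x
  simp_rw [withDensity_apply _ measurableSet_Ici] at h
  simp_rw [div_eq_mul_inv]
  exact (setLIntegral_withDensity_eq_setLIntegral_mul _ hg (hB.measurable.pow_const _).inv
    measurableSet_Ici).symm.trans_le h

end TailMeasure

theorem sq_lintegral_mul_le {β : Type*} [MeasurableSpace β] (μ : Measure β) {f g w : β → ℝ≥0∞}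
    (hf : AEMeasurable f μ) (hg : AEMeasurable g μ) (hw : AEMeasurable w μ)
    (hw_top : ∀ᵐ a ∂μ, w a ≠ ∞) (hw_zero : ∀ᵐ a ∂μ, w a = 0 → f a = 0) :
    (∫⁻ a, f a * g a ∂μ) ^ 2 ≤ (∫⁻ a, f a ^ 2 / w a ∂μ) * ∫⁻ a, g a ^ 2 * w a ∂μ := by
  set r := fun a => w a ^ (2⁻¹ : ℝ)
  have hr : AEMeasurable r μ := hw.pow_const _
  have hsplit : ∀ᵐ a ∂μ, f a * g a = (f a / r a) * (g a * r a) := by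
    filter_upwards [hw_top, hw_zero] with a hwa_top hwa_zero
    rcases eq_or_ne (w a) 0 with hwa0 | hwa0
    · simp [hwa_zero hwa0]
    have hr0 : r a ≠ 0 := by simp [r, hwa0]
    have hr_top : r a ≠ ∞ := by simp [r, hwa_top]
    rw [div_eq_mul_inv, show f a * (r a)⁻¹ * (g a * r a) = f a * g a * ((r a)⁻¹ * r a) by ring,
      ENNReal.inv_mul_cancel hr0 hr_top, mul_one]
  have hF : ∀ a, (f a / r a) ^ (2 : ℝ) = f a ^ 2 / w a := fun a => by
    rw [ENNReal.rpow_two, div_eq_mul_inv, div_eq_mul_inv, mul_pow, ← ENNReal.inv_pow,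
      ENNReal.rpow_two_inv_sq]
  have hG : ∀ a, (g a * r a) ^ (2 : ℝ) = g a ^ 2 * w a := fun a => by
    rw [ENNReal.rpow_two, mul_pow, ENNReal.rpow_two_inv_sq]
  have hHolder := ENNReal.lintegral_mul_le_Lp_mul_Lq μ Real.HolderConjugate.two_two
    (hf.div hr) (hg.mul hr)
  simp only [Pi.mul_apply, Pi.div_apply, hF, hG] at hHolder
  calc (∫⁻ a, f a * g a ∂μ) ^ 2 = (∫⁻ a, (f a / r a) * (g a * r a) ∂μ) ^ 2 := by
        rw [lintegral_congr_ae hsplit]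
    _ ≤ ((∫⁻ a, f a ^ 2 / w a ∂μ) ^ (1 / 2 : ℝ) * (∫⁻ a, g a ^ 2 * w a ∂μ) ^ (1 / 2 : ℝ)) ^ 2 := by
        gcongr
    _ = (∫⁻ a, f a ^ 2 / w a ∂μ) * ∫⁻ a, g a ^ 2 * w a ∂μ := by
        rw [mul_pow, one_div, ENNReal.rpow_two_inv_sq, ENNReal.rpow_two_inv_sq]

theorem lintegral_mul_setLIntegral_Ici_eq {α : Type*} [LinearOrder α] [TopologicalSpace α]
    [OrderClosedTopology α] [SecondCountableTopology α] [MeasurableSpace α]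
    [OpensMeasurableSpace α] (μ : Measure α) [SFinite μ] {F G : α → ℝ≥0∞}
    (hF : AEMeasurable F μ) (hG : AEMeasurable G μ) :
    ∫⁻ x, F x * ∫⁻ y in Ici x, G y ∂μ ∂μ = ∫⁻ y, (∫⁻ x in Iic y, F x ∂μ) * G y ∂μ := by
  set K : α × α → ℝ≥0∞ := {p | p.1 ≤ p.2}.indicator fun p => F p.1 * G p.2
  have hK : AEMeasurable K (μ.prod μ) :=
    ((hF.comp_quasiMeasurePreserving Measure.quasiMeasurePreserving_fst).mul
      (hG.comp_quasiMeasurePreserving Measure.quasiMeasurePreserving_snd)).indicator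
      (measurableSet_le measurable_fst measurable_snd)
  calc ∫⁻ x, F x * ∫⁻ y in Ici x, G y ∂μ ∂μ = ∫⁻ x, ∫⁻ y, K (x, y) ∂μ ∂μ :=
        lintegral_congr fun x => by
          rw [← lintegral_const_mul'' _ hG.restrict, ← lintegral_indicator measurableSet_Ici]
          rfl
    _ = ∫⁻ y, ∫⁻ x, K (x, y) ∂μ ∂μ := lintegral_lintegral_swap hK
    _ = _ := lintegral_congr fun y => by
          rw [← lintegral_mul_const'' _ hF.restrict, ← lintegral_indicator measurableSet_Iic]
          rfl

section Hardy

variable {α : Type*} [ConditionallyCompleteLinearOrder α] [TopologicalSpace α] [OrderTopology α]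
  [SecondCountableTopology α] [MeasurableSpace α] [BorelSpace α] (ν : Measure α)

theorem sq_setLIntegral_Ici_mul_le {v φ : α → ℝ≥0∞} (hv : Measurable v) (hφ : AEMeasurable φ ν)
    (hB : ∀ r, ∫⁻ y in Ici r, v y ^ 2 ∂ν ≠ ∞) (x : α) :
    (∫⁻ y in Ici x, v y * φ y ∂ν) ^ 2 ≤
      4 * (∫⁻ y in Ici x, v y ^ 2 ∂ν) ^ (2⁻¹ : ℝ) *
        ∫⁻ y in Ici x, φ y ^ 2 * (∫⁻ z in Ici y, v z ^ 2 ∂ν) ^ (2⁻¹ : ℝ) ∂ν := by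
  have hBm : Measurable fun y => ∫⁻ z in Ici y, v z ^ 2 ∂ν :=
    Antitone.measurable fun a b hab => lintegral_mono_set (Ici_subset_Ici.mpr hab)
  calc (∫⁻ y in Ici x, v y * φ y ∂ν) ^ 2
      ≤ (∫⁻ y in Ici x, v y ^ 2 / (∫⁻ z in Ici y, v z ^ 2 ∂ν) ^ (2⁻¹ : ℝ) ∂ν) *
          ∫⁻ y in Ici x, φ y ^ 2 * (∫⁻ z in Ici y, v z ^ 2 ∂ν) ^ (2⁻¹ : ℝ) ∂ν := by
        refine sq_lintegral_mul_le _ hv.aemeasurable hφ.restrict (hBm.pow_const _).aemeasurable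
          (ae_of_all _ fun y => ENNReal.rpow_ne_top_of_nonneg (by norm_num) (hB y)) ?_
        filter_upwards [ae_restrict_Ici_eq_zero_of_setLIntegral_Ici_eq_zero ν (hv.pow_const 2) x]
          with y hy hy0
        exact pow_eq_zero_iff two_ne_zero |>.mp
          (hy ((ENNReal.rpow_eq_zero_iff_of_pos (by norm_num)).mp hy0))
    _ ≤ _ := by
        gcongr
        exact setLIntegral_Ici_div_rpow_le ν (hv.pow_const 2) x

theorem setLIntegral_Iic_mul_rpow_le {u b : α → ℝ≥0∞} (hu : Measurable u)
    (hA : ∀ r, ∫⁻ x in Iic r, u x ^ 2 ∂ν ≠ ∞) {M : ℝ≥0∞}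
    (hM : ∀ r, (∫⁻ x in Iic r, u x ^ 2 ∂ν) * b r ≤ M) (y : α) :
    (∫⁻ x in Iic y, u x ^ 2 * b x ^ (2⁻¹ : ℝ) ∂ν) * b y ^ (2⁻¹ : ℝ) ≤ 4 * M := by
  set A := fun r => ∫⁻ x in Iic r, u x ^ 2 ∂ν
  have hAm : Measurable A :=
    Monotone.measurable fun a b hab => lintegral_mono_set (Iic_subset_Iic.mpr hab)
  have hsqrt : ∀ r, A r ^ (2⁻¹ : ℝ) * b r ^ (2⁻¹ : ℝ) ≤ M ^ (2⁻¹ : ℝ) := fun r => by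
    rw [← ENNReal.mul_rpow_of_nonneg _ _ (by norm_num)]
    exact ENNReal.rpow_le_rpow (hM r) (by norm_num)
  -- `Ici` in `αᵒᵈ` is `Iic` in `α`: the tail lemmas, applied in `αᵒᵈ`, handle initial segments.
  have hpt : ∀ᵐ x ∂ν.restrict (Iic y),
      u x ^ 2 * b x ^ (2⁻¹ : ℝ) ≤ M ^ (2⁻¹ : ℝ) * (u x ^ 2 / A x ^ (2⁻¹ : ℝ)) := by
    filter_upwards [ae_restrict_Ici_eq_zero_of_setLIntegral_Ici_eq_zero (α := αᵒᵈ) ν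
      (hu.pow_const 2) y] with x hx
    rcases eq_or_ne (A x) 0 with hAx | hAx
    · simp [hx hAx]
    have h0 : A x ^ (2⁻¹ : ℝ) ≠ 0 := by simp [hAx]
    have htop : A x ^ (2⁻¹ : ℝ) ≠ ∞ := ENNReal.rpow_ne_top_of_nonneg (by norm_num) (hA x)
    calc u x ^ 2 * b x ^ (2⁻¹ : ℝ) ≤ u x ^ 2 * (M ^ (2⁻¹ : ℝ) / A x ^ (2⁻¹ : ℝ)) := by
          gcongr
          rw [ENNReal.le_div_iff_mul_le (Or.inl h0) (Or.inl htop), mul_comm]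
          exact hsqrt x
      _ = _ := by simp only [div_eq_mul_inv]; ring
  calc (∫⁻ x in Iic y, u x ^ 2 * b x ^ (2⁻¹ : ℝ) ∂ν) * b y ^ (2⁻¹ : ℝ)
      ≤ (M ^ (2⁻¹ : ℝ) * ∫⁻ x in Iic y, u x ^ 2 / A x ^ (2⁻¹ : ℝ) ∂ν) * b y ^ (2⁻¹ : ℝ) := by
        rw [← lintegral_const_mul (f := fun x => u x ^ 2 / A x ^ (2⁻¹ : ℝ)) _
          ((hu.pow_const 2).div (hAm.pow_const _))]
        gcongr ?_ * _
        exact lintegral_mono_ae hpt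
    _ ≤ (M ^ (2⁻¹ : ℝ) * (4 * A y ^ (2⁻¹ : ℝ))) * b y ^ (2⁻¹ : ℝ) := by
        gcongr
        exact setLIntegral_Ici_div_rpow_le (α := αᵒᵈ) ν (hu.pow_const 2) y
    _ = 4 * (M ^ (2⁻¹ : ℝ) * (A y ^ (2⁻¹ : ℝ) * b y ^ (2⁻¹ : ℝ))) := by ring
    _ ≤ 4 * (M ^ (2⁻¹ : ℝ) * M ^ (2⁻¹ : ℝ)) := by grw [hsqrt y]
    _ = 4 * M := by rw [← sq, ENNReal.rpow_two_inv_sq]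

theorem lintegral_mul_sq_setLIntegral_Ici_le [SFinite ν] {u v φ : α → ℝ≥0∞} (hu : Measurable u)
    (hv : Measurable v) (hφ : AEMeasurable φ ν) (hA : ∀ r, ∫⁻ x in Iic r, u x ^ 2 ∂ν ≠ ∞)
    (hB : ∀ r, ∫⁻ y in Ici r, v y ^ 2 ∂ν ≠ ∞) {M : ℝ≥0∞}
    (hM : ∀ r, (∫⁻ x in Iic r, u x ^ 2 ∂ν) * ∫⁻ y in Ici r, v y ^ 2 ∂ν ≤ M) :
    ∫⁻ x, u x ^ 2 * (∫⁻ y in Ici x, v y * φ y ∂ν) ^ 2 ∂ν ≤ 16 * M * ∫⁻ y, φ y ^ 2 ∂ν := by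
  set B := fun r => ∫⁻ y in Ici r, v y ^ 2 ∂ν
  have hBm : Measurable B :=
    Antitone.measurable fun a b hab => lintegral_mono_set (Ici_subset_Ici.mpr hab)
  calc ∫⁻ x, u x ^ 2 * (∫⁻ y in Ici x, v y * φ y ∂ν) ^ 2 ∂ν
      ≤ ∫⁻ x, u x ^ 2 * (4 * B x ^ (2⁻¹ : ℝ) *
          ∫⁻ y in Ici x, φ y ^ 2 * B y ^ (2⁻¹ : ℝ) ∂ν) ∂ν := by
        gcongr with x
        exact sq_setLIntegral_Ici_mul_le ν hv hφ hB x
    _ = 4 * ∫⁻ x, u x ^ 2 * B x ^ (2⁻¹ : ℝ) *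
          ∫⁻ y in Ici x, φ y ^ 2 * B y ^ (2⁻¹ : ℝ) ∂ν ∂ν := by
        rw [← lintegral_const_mul' _ _ (by norm_num)]
        congr with x
        ring
    _ = 4 * ∫⁻ y, (∫⁻ x in Iic y, u x ^ 2 * B x ^ (2⁻¹ : ℝ) ∂ν) *
          (φ y ^ 2 * B y ^ (2⁻¹ : ℝ)) ∂ν := by
        rw [lintegral_mul_setLIntegral_Ici_eq ν (F := fun x => u x ^ 2 * B x ^ (2⁻¹ : ℝ))
          (G := fun y => φ y ^ 2 * B y ^ (2⁻¹ : ℝ))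
          ((hu.pow_const 2).mul (hBm.pow_const _)).aemeasurable
          ((hφ.pow_const 2).mul (hBm.pow_const _).aemeasurable)]
    _ ≤ 4 * ∫⁻ y, 4 * M * φ y ^ 2 ∂ν := by
        gcongr 4 * ∫⁻ y, ?_ ∂ν with y
        calc _ = ((∫⁻ x in Iic y, u x ^ 2 * B x ^ (2⁻¹ : ℝ) ∂ν) * B y ^ (2⁻¹ : ℝ)) * φ y ^ 2 := by
              ring
          _ ≤ 4 * M * φ y ^ 2 := by
              gcongr ?_ * _
              exact setLIntegral_Iic_mul_rpow_le ν hu hA hM y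
    _ = 16 * M * ∫⁻ y, φ y ^ 2 ∂ν := by
        rw [lintegral_const_mul'' _ (hφ.pow_const 2)]
        ring

end Hardy

section Bochner

variable {β E : Type*} [MeasurableSpace β] [NormedAddCommGroup E] {μ : Measure β}

theorem ofReal_integral_norm_sq_eq_lintegral_enorm_sq {f : β → E}
    (hf : Integrable (fun x => ‖f x‖ ^ 2) μ) :
    ENNReal.ofReal (∫ x, ‖f x‖ ^ 2 ∂μ) = ∫⁻ x, ‖f x‖ₑ ^ 2 ∂μ := by
  rw [ofReal_integral_eq_lintegral_ofReal hf (ae_of_all _ fun _ => by positivity)]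
  congr with x
  rw [ENNReal.ofReal_pow (norm_nonneg _), ofReal_norm]

theorem integral_le_toReal_lintegral {g : β → ℝ} {G : β → ℝ≥0∞} (hgG : ∀ x, ‖g x‖ₑ ≤ G x)
    (hG : ∫⁻ x, G x ∂μ ≠ ∞) : ∫ x, g x ∂μ ≤ (∫⁻ x, G x ∂μ).toReal :=
  calc ∫ x, g x ∂μ ≤ ‖∫ x, g x ∂μ‖ := Real.le_norm_self _
    _ ≤ (∫⁻ x, ENNReal.ofReal ‖g x‖ ∂μ).toReal := norm_integral_le_lintegral_norm g
    _ ≤ (∫⁻ x, G x ∂μ).toReal :=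
      ENNReal.toReal_mono hG (lintegral_mono fun x => by rw [ofReal_norm]; exact hgG x)

end Bochner

/-- Talenti–Tomaselli–Muckenhoupt criterion, direction (iii) ⟹ (i):
if `U ∈ L²((-∞,R])`, `V ∈ L²([R,∞))` for all `R` and
`sup_r (∫_{-∞}^r |U|²)(∫_r^∞ |V|²) < ∞`, then the weighted Hardy inequality holds. -/
theorem muckenhoupt_hardy (U V : ℝ → ℂ)
    (hUm : Measurable U) (hVm : Measurable V)
    (hU : ∀ R : ℝ, IntegrableOn (fun x => ‖U x‖ ^ 2) (Set.Iic R) volume)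
    (hV : ∀ R : ℝ, IntegrableOn (fun x => ‖V x‖ ^ 2) (Set.Ici R) volume)
    (hsup : ∃ M : ℝ, ∀ r : ℝ,
      (∫ x in Set.Iic r, ‖U x‖ ^ 2) * (∫ x in Set.Ici r, ‖V x‖ ^ 2) ≤ M) :
    ∃ C : ℝ, 0 < C ∧ ∀ f : ℝ → ℂ, MemLp f 2 volume →
      ∫ x : ℝ, ‖U x * ∫ y in Set.Ici x, V y * f y‖ ^ 2
        ≤ C * ∫ x : ℝ, ‖f x‖ ^ 2 := by
  obtain ⟨M, hM⟩ := hsup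
  have hA r := ofReal_integral_norm_sq_eq_lintegral_enorm_sq (hU r)
  have hB r := ofReal_integral_norm_sq_eq_lintegral_enorm_sq (hV r)
  have hAB : ∀ r, (∫⁻ x in Iic r, ‖U x‖ₑ ^ 2) * ∫⁻ y in Ici r, ‖V y‖ₑ ^ 2 ≤
      ENNReal.ofReal (max M 1) := fun r => by
    rw [← hA, ← hB, ← ENNReal.ofReal_mul (integral_nonneg fun _ => by positivity)]
    exact ENNReal.ofReal_le_ofReal ((hM r).trans (le_max_left _ _))
  refine ⟨16 * max M 1, by positivity, fun f hf => ?_⟩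
  have hf2 := ofReal_integral_norm_sq_eq_lintegral_enorm_sq
    ((memLp_two_iff_integrable_sq_norm hf.1).mp hf)
  have hHardy := lintegral_mul_sq_setLIntegral_Ici_le volume hUm.enorm hVm.enorm hf.1.enorm
    (fun r => hA r ▸ ENNReal.ofReal_ne_top) (fun r => hB r ▸ ENNReal.ofReal_ne_top) hAB
  have hfin : 16 * ENNReal.ofReal (max M 1) * ∫⁻ x, ‖f x‖ₑ ^ 2 ≠ ∞ := by
    rw [← hf2]; finiteness
  calc ∫ x, ‖U x * ∫ y in Ici x, V y * f y‖ ^ 2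
      ≤ (∫⁻ x, ‖U x‖ₑ ^ 2 * (∫⁻ y in Ici x, ‖V y‖ₑ * ‖f y‖ₑ) ^ 2).toReal := by
        refine integral_le_toReal_lintegral (fun x => ?_) (ne_top_of_le_ne_top hfin hHardy)
        rw [enorm_pow, enorm_norm, enorm_mul, mul_pow]
        gcongr
        exact (enorm_integral_le_lintegral_enorm _).trans_eq (by simp_rw [enorm_mul])
    _ ≤ (16 * ENNReal.ofReal (max M 1) * ∫⁻ x, ‖f x‖ₑ ^ 2).toReal :=
        ENNReal.toReal_mono hfin hHardy
    _ = 16 * max M 1 * ∫ x, ‖f x‖ ^ 2 := by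
        rw [← hf2, ENNReal.toReal_mul, ENNReal.toReal_mul, ENNReal.toReal_ofReal (by positivity),
          ENNReal.toReal_ofReal (integral_nonneg fun _ => by positivity)]
        norm_num
end

section
/- Let S be a densely defined closed operator in a complex Hilbert space H such that both S and its adjoint S* have kernels of dimension at most 2 at every point (i.e., dim ker(S - zI) ≤ 2 and dim ker(S* - w̄ I) ≤ 2 for all z). Then the essential spectrum σ_e(S) := {z : not (dim ker(S-zI) < ∞ and ran(S-zI) closed)} is contained in the closure of the numerical range Θ(S) = {⟨f, Sf⟩ : f ∈ dom(S), ‖f‖ = 1}. -/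
open LinearPMap

open Filter Topology

/-!
If `z` lies at distance `ε > 0` from the numerical range, then for every unit vector `f` in the
domain, `ε ≤ ‖⟪f, S f⟫ - z‖ = ‖⟪f, (S - z) f⟫‖ ≤ ‖(S - z) f‖`, so `S - z` is bounded below.
Hence `S - z` is injective, and, being closed as a bounded perturbation of the closed operator
`S`, it has closed range: the preimages of a convergent sequence in the range form a Cauchy
sequence, whose limit lies in the domain by closedness of the graph.
-/

theorem norm_inner_sub_le_norm_sub_smul {𝕜 E : Type*} [RCLike 𝕜] [NormedAddCommGroup E]
    [InnerProductSpace 𝕜 E] {x : E} (hx : ‖x‖ = 1) (y : E) (z : 𝕜) :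
    ‖inner 𝕜 x y - z‖ ≤ ‖y - z • x‖ :=
  calc ‖inner 𝕜 x y - z‖ = ‖inner 𝕜 x (y - z • x)‖ := by
        rw [inner_sub_right, inner_smul_right, inner_self_eq_norm_sq_to_K, hx]; simp
    _ ≤ ‖y - z • x‖ := by simpa [hx] using norm_inner_le_norm (𝕜 := 𝕜) x (y - z • x)

namespace LinearPMap

variable {𝕜 E F : Type*} [RCLike 𝕜]

section Normed

variable [NormedAddCommGroup E] [NormedSpace 𝕜 E] [NormedAddCommGroup F] [NormedSpace 𝕜 F]

theorem IsClosed.vadd {g : E →ₗ.[𝕜] F} (hg : g.IsClosed) (f : E →L[𝕜] F) :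
    ((f : E →ₗ[𝕜] F) +ᵥ g).IsClosed := by
  have hgraph : ((f : E →ₗ[𝕜] F) +ᵥ g).graph =
      ((fun p : E × F => (p.1, p.2 - f p.1)) ⁻¹' g.graph : Set (E × F)) := by
    ext ⟨x, y⟩
    simp only [mem_graph_iff, vadd_domain, vadd_apply, Set.mem_preimage, SetLike.mem_coe]
    refine exists_congr fun x' => and_congr_right fun hx => ?_
    rw [hx, eq_sub_iff_add_eq, add_comm]
    rfl
  unfold LinearPMap.IsClosed
  rw [hgraph]
  exact hg.preimage (by fun_prop)

theorem IsClosed.isClosed_range [CompleteSpace E] {T : E →ₗ.[𝕜] F} (hT : T.IsClosed)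
    {K : NNReal} (hK : AntilipschitzWith K T) :
    _root_.IsClosed (LinearMap.range T.toFun : Set F) := by
  rw [LinearMap.coe_range, ← closure_subset_iff_isClosed]
  intro y hy
  have : (comap T (𝓝 y)).NeBot := comap_neBot fun t ht => by
    obtain ⟨_, hyt, a, rfl⟩ := mem_closure_iff_nhds.mp hy t ht
    exact ⟨a, hyt⟩
  have hcauchy : Cauchy (comap T (𝓝 y)) := (cauchy_nhds).comap hK.comap_uniformity_le
  obtain ⟨x, hx : Tendsto ((↑) : T.domain → E) (comap T (𝓝 y)) (𝓝 x)⟩ :=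
    CompleteSpace.complete (hcauchy.map uniformContinuous_subtype_val)
  have hxy : (x, y) ∈ T.graph :=
    hT.mem_of_tendsto (hx.prodMk_nhds tendsto_comap) (Eventually.of_forall T.mem_graph)
  obtain ⟨x', -, hx'⟩ := T.mem_graph_iff.mp hxy
  exact ⟨x', hx'⟩

end Normed

section NumericalRange

variable [NormedAddCommGroup E] [InnerProductSpace 𝕜 E]

def numericalRange (S : E →ₗ.[𝕜] E) : Set 𝕜 :=
  {c | ∃ f : S.domain, ‖(f : E)‖ = 1 ∧ inner 𝕜 (f : E) (S f) = c}

theorem antilipschitz_sub_smul_of_notMem_closure_numericalRange (S : E →ₗ.[𝕜] E) {z : 𝕜}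
    (hz : z ∉ _root_.closure S.numericalRange) :
    ∃ K, AntilipschitzWith K (S.toFun - z • S.domain.subtype) := by
  obtain ⟨ε, hε, hgap⟩ : ∃ ε > 0, ∀ c ∈ S.numericalRange, ε ≤ dist z c := by
    simpa [Metric.mem_closure_iff] using hz
  refine ⟨ε⁻¹.toNNReal, antilipschitz_of_bound_of_norm_one _ fun u hu => ?_⟩
  have hεu : ε ≤ ‖S u - z • (u : E)‖ := calc
    ε ≤ dist z (inner 𝕜 (u : E) (S u)) := hgap _ ⟨u, hu, rfl⟩
    _ = ‖inner 𝕜 (u : E) (S u) - z‖ := by rw [dist_comm, dist_eq_norm]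
    _ ≤ ‖S u - z • (u : E)‖ := norm_inner_sub_le_norm_sub_smul (x := (u : E)) hu _ _
  rw [Real.coe_toNNReal _ (inv_nonneg.mpr hε.le), le_inv_mul_iff₀ hε, mul_one]
  exact hεu

end NumericalRange

end LinearPMap

theorem essential_spectrum_subset_numerical_range_general
    {H : Type*} [NormedAddCommGroup H] [InnerProductSpace ℂ H] [CompleteSpace H]
    (S : H →ₗ.[ℂ] H)
    (hclosed : IsClosed (S.graph : Set (H × H))) :
    {z : ℂ | ¬ (FiniteDimensional ℂ
        (LinearMap.ker (S.toFun - z • S.domain.subtype)) ∧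
      IsClosed ((LinearMap.range (S.toFun - z • S.domain.subtype) : Submodule ℂ H)
        : Set H))}
    ⊆ closure {c : ℂ | ∃ f : S.domain, ‖(f : H)‖ = 1 ∧
        (inner ℂ ((f : H)) (S f) : ℂ) = c} := by
  intro z hz
  by_contra hzΘ
  obtain ⟨K, hK⟩ := S.antilipschitz_sub_smul_of_notMem_closure_numericalRange hzΘ
  set T : H →ₗ.[ℂ] H := (((-z) • ContinuousLinearMap.id ℂ H : H →L[ℂ] H) : H →ₗ[ℂ] H) +ᵥ S
  have hT : T.toFun = S.toFun - z • S.domain.subtype := by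
    ext x
    simp [T, sub_eq_add_neg, add_comm]
  have hker : LinearMap.ker (S.toFun - z • S.domain.subtype) = ⊥ :=
    LinearMap.ker_eq_bot.mpr hK.injective
  refine hz ⟨hker ▸ inferInstance, ?_⟩
  rw [← hT] at hK ⊢
  exact (LinearPMap.IsClosed.vadd (g := S) hclosed _).isClosed_range hK

/-- For a densely defined closed operator `S` in a complex Hilbert space
with `dim ker(S - z) ≤ 2` and `dim ker(S* - z̄) ≤ 2` for all `z`, the essential
spectrum of `S` is contained in the closure of the numerical range of `S`. -/
theorem essential_spectrum_subset_numerical_range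
    {H : Type*} [NormedAddCommGroup H] [InnerProductSpace ℂ H] [CompleteSpace H]
    (S : H →ₗ.[ℂ] H)
    (hdense : Dense (S.domain : Set H))
    (hclosed : IsClosed (S.graph : Set (H × H)))
    (hker : ∀ z : ℂ,
      Module.rank ℂ (LinearMap.ker (S.toFun - z • S.domain.subtype)) ≤ 2)
    (hker' : ∀ z : ℂ,
      Module.rank ℂ (LinearMap.ker (S.adjoint.toFun
        - (starRingEnd ℂ z) • S.adjoint.domain.subtype)) ≤ 2) :
    {z : ℂ | ¬ (FiniteDimensional ℂ
        (LinearMap.ker (S.toFun - z • S.domain.subtype)) ∧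
      IsClosed ((LinearMap.range (S.toFun - z • S.domain.subtype) : Submodule ℂ H)
        : Set H))}
    ⊆ closure {c : ℂ | ∃ f : S.domain, ‖(f : H)‖ = 1 ∧
        (inner ℂ ((f : H)) (S f) : ℂ) = c} :=
  essential_spectrum_subset_numerical_range_general S hclosed
end

section
/- Let ψ : ℝ → ℂ be a distributional solution of -ψ'' + Vψ = λψ with V ∈ L^∞(ℝ) and all derivatives of V in L^∞(ℝ), and suppose ψ ∈ L²(ℝ). Then ψ^{(k)} ∈ L^∞(ℝ) ∩ L²(ℝ) for all k ∈ ℕ₀. In particular ψ is bounded. -/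
open MeasureTheory

open Set intervalIntegral ENNReal in
/-- Uniform-in-`x` local `L¹` bound from a global `L²` bound. -/
private lemma locL1x {f : ℝ → ℂ} (hf : MemLp f 2 volume) (x : ℝ) :
    ∫ t in x..(x+1), ‖f t‖ ≤ (eLpNorm f 2 volume).toReal := by
  have hle : x ≤ x + 1 := by linarith
  set μ := volume.restrict (Set.Ioc x (x+1)) with hμ
  haveI : IsProbabilityMeasure μ := ⟨by simp [hμ, Real.volume_Ioc]⟩
  have hms : AEStronglyMeasurable f μ := hf.1.restrict
  have h1 : ∫ t in x..(x+1), ‖f t‖ = (eLpNorm f 1 μ).toReal := by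
    rw [intervalIntegral.integral_of_le hle, eLpNorm_one_eq_lintegral_enorm,
      ← integral_norm_eq_lintegral_enorm hms]
  rw [h1]
  have h2 : eLpNorm f 1 μ ≤ eLpNorm f 2 μ :=
    eLpNorm_le_eLpNorm_of_exponent_le (by norm_num) hms
  have h3 : eLpNorm f 2 μ ≤ eLpNorm f 2 volume :=
    eLpNorm_mono_measure f Measure.restrict_le_self
  exact ENNReal.toReal_mono (by simpa using hf.2.ne) (h2.trans h3)

open Set intervalIntegral ENNReal in
/-- The local average of the norm of an `L²` function is again in `L²`. -/
private lemma avgL2 {g : ℝ → ℂ} (hgc : Continuous g) (hg : MemLp g 2 volume) :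
    MemLp (fun x => ∫ t in x..(x+1), ‖g t‖) 2 volume := by
  have hint : ∀ a b : ℝ, IntervalIntegrable (fun t => ‖g t‖) volume a b :=
    fun a b => (hgc.norm).intervalIntegrable a b
  have hcont : Continuous (fun x => ∫ t in x..(x+1), ‖g t‖) := by
    have hc : Continuous (fun x : ℝ => ∫ t in (0:ℝ)..x, ‖g t‖) :=
      intervalIntegral.continuous_primitive hint 0
    have heq : (fun x : ℝ => ∫ t in x..(x+1), ‖g t‖)
        = fun x => (∫ t in (0:ℝ)..(x+1), ‖g t‖) - ∫ t in (0:ℝ)..x, ‖g t‖ := by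
      funext x
      rw [eq_sub_iff_add_eq, add_comm]
      exact intervalIntegral.integral_add_adjacent_intervals (hint 0 x) (hint x (x+1))
    rw [heq]
    exact (hc.comp (continuous_id.add continuous_const)).sub hc
  set h : ℝ → ℝ := fun x => ∫ t in x..(x+1), ‖g t‖ with hh
  refine ⟨hcont.aestronglyMeasurable, ?_⟩
  set H : ℝ → ℝ≥0∞ := fun t => (‖g t‖₊ : ℝ≥0∞) ^ (2:ℝ) with hH
  have hHm : Measurable H :=
    (hgc.measurable.nnnorm.coe_nnreal_ennreal).pow_const _
  have hHfin : ∫⁻ t, H t < ⊤ := by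
    have := hg.2
    rw [eLpNorm_eq_lintegral_rpow_enorm_toReal (by norm_num) (by norm_num)] at this
    simp only [ENNReal.toReal_ofNat, enorm_eq_nnnorm] at this
    have h2 : ∫⁻ t, (‖g t‖₊ : ℝ≥0∞) ^ (2:ℝ) ≠ ⊤ := by
      intro hcontra
      rw [hcontra] at this
      simp [ENNReal.top_rpow_of_pos] at this
    exact lt_top_iff_ne_top.2 h2
  -- pointwise: ‖h x‖₊ ^ 2 ≤ ∫⁻ t in Ioc x (x+1), H t
  have key : ∀ x : ℝ, (‖h x‖₊ : ℝ≥0∞) ^ (2:ℝ) ≤ ∫⁻ t in Set.Ioc x (x+1), H t := by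
    intro x
    have hle : x ≤ x + 1 := by linarith
    set μ := volume.restrict (Set.Ioc x (x+1)) with hμ
    haveI : IsProbabilityMeasure μ := ⟨by simp [hμ, Real.volume_Ioc]⟩
    have hms : AEStronglyMeasurable g μ := hg.1.restrict
    have h1 : (‖h x‖₊ : ℝ≥0∞) ≤ eLpNorm g 1 μ := by
      have : h x = (eLpNorm g 1 μ).toReal := by
        show (∫ t in x..(x+1), ‖g t‖) = _
        rw [intervalIntegral.integral_of_le hle, eLpNorm_one_eq_lintegral_enorm,
          ← integral_norm_eq_lintegral_enorm hms]
      rw [this]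
      have hfin : eLpNorm g 1 μ ≠ ⊤ := by
        have h2 : eLpNorm g 1 μ ≤ eLpNorm g 2 μ :=
          eLpNorm_le_eLpNorm_of_exponent_le (by norm_num) hms
        have h3 : eLpNorm g 2 μ ≤ eLpNorm g 2 volume :=
          eLpNorm_mono_measure g Measure.restrict_le_self
        exact ((h2.trans h3).trans_lt hg.2).ne
      rw [Real.nnnorm_of_nonneg ENNReal.toReal_nonneg]
      exact le_of_eq (by rw [← ENNReal.ofReal_eq_coe_nnreal]; exact ENNReal.ofReal_toReal hfin)
    have h2 : eLpNorm g 1 μ ≤ eLpNorm g 2 μ :=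
      eLpNorm_le_eLpNorm_of_exponent_le (by norm_num) hms
    have h3 : eLpNorm g 2 μ = (∫⁻ t in Set.Ioc x (x+1), H t) ^ (1/(2:ℝ)) := by
      rw [eLpNorm_eq_lintegral_rpow_enorm_toReal (by norm_num) (by norm_num)]
      norm_num [hH, hμ, enorm_eq_nnnorm]
    calc (‖h x‖₊ : ℝ≥0∞) ^ (2:ℝ) ≤ (eLpNorm g 2 μ) ^ (2:ℝ) := by
          exact ENNReal.rpow_le_rpow (h1.trans h2) (by norm_num)
      _ = ∫⁻ t in Set.Ioc x (x+1), H t := by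
          rw [h3, ← ENNReal.rpow_mul]; norm_num
  -- Tonelli
  have swap : ∫⁻ x, ∫⁻ t in Set.Ioc x (x+1), H t ∂volume ∂volume = ∫⁻ t, H t := by
    have hmeas : Measurable (fun p : ℝ × ℝ => Set.indicator {q : ℝ × ℝ | q.1 < q.2 ∧ q.2 ≤ q.1 + 1} (fun q => H q.2) p) := by
      apply Measurable.indicator (hHm.comp measurable_snd)
      apply MeasurableSet.inter
      · exact measurableSet_lt measurable_fst measurable_snd
      · exact measurableSet_le measurable_snd (measurable_fst.add_const 1)
    calc ∫⁻ x, ∫⁻ t in Set.Ioc x (x+1), H t ∂volume ∂volume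
        = ∫⁻ x, ∫⁻ t, Set.indicator {q : ℝ × ℝ | q.1 < q.2 ∧ q.2 ≤ q.1 + 1} (fun q => H q.2) (x, t) ∂volume ∂volume := by
          apply lintegral_congr; intro x
          rw [← lintegral_indicator measurableSet_Ioc]
          apply lintegral_congr; intro t
          by_cases ht : t ∈ Set.Ioc x (x+1)
          · rw [Set.indicator_of_mem ht, Set.indicator_of_mem]
            exact ⟨ht.1, ht.2⟩
          · rw [Set.indicator_of_notMem ht, Set.indicator_of_notMem]
            intro hc; exact ht ⟨hc.1, hc.2⟩
      _ = ∫⁻ t, ∫⁻ x, Set.indicator {q : ℝ × ℝ | q.1 < q.2 ∧ q.2 ≤ q.1 + 1} (fun q => H q.2) (x, t) ∂volume ∂volume := by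
          exact lintegral_lintegral_swap hmeas.aemeasurable
      _ = ∫⁻ t, H t := by
          apply lintegral_congr; intro t
          have : (fun x => Set.indicator {q : ℝ × ℝ | q.1 < q.2 ∧ q.2 ≤ q.1 + 1} (fun q => H q.2) (x, t))
              = Set.indicator (Set.Ico (t-1) t) (fun _ => H t) := by
            funext x
            by_cases hx : x ∈ Set.Ico (t-1) t
            · rw [Set.indicator_of_mem hx, Set.indicator_of_mem]
              exact ⟨hx.2, by linarith [hx.1]⟩
            · rw [Set.indicator_of_notMem hx, Set.indicator_of_notMem]
              intro hc
              exact hx ⟨by linarith [hc.2], hc.1⟩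
          rw [this, lintegral_indicator measurableSet_Ico]
          simp [Real.volume_Ico]
  -- conclude
  rw [eLpNorm_eq_lintegral_rpow_enorm_toReal (by norm_num) (by norm_num)]
  simp only [ENNReal.toReal_ofNat]
  have : ∫⁻ x, (‖h x‖₊ : ℝ≥0∞) ^ (2:ℝ) ∂volume ≤ ∫⁻ t, H t := by
    rw [← swap]
    exact lintegral_mono key
  refine ENNReal.rpow_lt_top_of_nonneg (by norm_num) ?_
  exact (this.trans_lt hHfin).ne

open Set intervalIntegral in
private lemma bdd_of_L2 {f : ℝ → ℂ} (hf : ContDiff ℝ 1 f) (h2 : MemLp f 2 volume)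
    (h2' : MemLp (deriv f) 2 volume) :
    ∃ M : ℝ, ∀ x, ‖f x‖ ≤ M := by
  refine ⟨(eLpNorm f 2 volume).toReal + (eLpNorm (deriv f) 2 volume).toReal, fun x => ?_⟩
  have hle : x ≤ x + 1 := by linarith
  have hcont : Continuous f := hf.continuous
  have hcont' : Continuous (deriv f) := hf.continuous_deriv le_rfl
  obtain ⟨y, hy, hymin⟩ := (isCompact_Icc (a := x) (b := x+1)).exists_isMinOn
    (Set.nonempty_Icc.2 hle) (hcont.norm.continuousOn)
  -- ‖f y‖ ≤ ∫ x..x+1 ‖f‖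
  have h1 : ‖f y‖ ≤ ∫ t in x..(x+1), ‖f t‖ := by
    have : ∫ t in x..(x+1), ‖f y‖ ≤ ∫ t in x..(x+1), ‖f t‖ := by
      apply intervalIntegral.integral_mono_on hle (by simp) (hcont.norm.intervalIntegrable _ _)
      intro t ht; exact hymin ht
    simpa using this
  -- ‖f x‖ ≤ ‖f y‖ + ∫ x..x+1 ‖f'‖
  have h2d : ‖f x‖ ≤ ‖f y‖ + ∫ t in x..(x+1), ‖deriv f t‖ := by
    have hftc : ∫ t in x..y, deriv f t = f y - f x :=
      intervalIntegral.integral_deriv_eq_sub (fun t _ => (hf.differentiable (by norm_num) t))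
        (hcont'.intervalIntegrable _ _)
    have : ‖f x - f y‖ ≤ ∫ t in x..(x+1), ‖deriv f t‖ := by
      have h4 : ‖f x - f y‖ = ‖∫ t in x..y, deriv f t‖ := by
        rw [hftc]; rw [norm_sub_rev]
      rw [h4]
      calc ‖∫ t in x..y, deriv f t‖ ≤ ∫ t in x..y, ‖deriv f t‖ :=
            intervalIntegral.norm_integral_le_integral_norm hy.1
        _ ≤ ∫ t in x..(x+1), ‖deriv f t‖ := by
            apply intervalIntegral.integral_mono_interval (le_refl x) hy.1 hy.2
              (Filter.Eventually.of_forall fun t => norm_nonneg _)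
              (hcont'.norm.intervalIntegrable _ _)
    calc ‖f x‖ ≤ ‖f y‖ + ‖f x - f y‖ := by
          have := norm_sub_norm_le (f x) (f y); linarith [norm_sub_rev (f x) (f y)]
      _ ≤ _ := by linarith
  calc ‖f x‖ ≤ ‖f y‖ + ∫ t in x..(x+1), ‖deriv f t‖ := h2d
    _ ≤ (∫ t in x..(x+1), ‖f t‖) + ∫ t in x..(x+1), ‖deriv f t‖ := by linarith
    _ ≤ _ := add_le_add (locL1x h2 x) (locL1x h2' x)

open Set intervalIntegral in
/-- Interpolation: `f, f'' ∈ L²` implies `f' ∈ L²`. -/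
private lemma deriv_memL2 {f : ℝ → ℂ} (hf : ContDiff ℝ 2 f) (h0 : MemLp f 2 volume)
    (h2 : MemLp (deriv (deriv f)) 2 volume) : MemLp (deriv f) 2 volume := by
  have hdf : Differentiable ℝ f := hf.differentiable (by norm_num)
  have hdf1 : ContDiff ℝ 1 (deriv f) := by
    have := (contDiff_succ_iff_deriv (n := 1)).1 (by exact_mod_cast hf)
    exact this.2.2
  have hdf' : Differentiable ℝ (deriv f) := hdf1.differentiable (by norm_num)
  have hcont'' : Continuous (deriv (deriv f)) := hdf1.continuous_deriv le_rfl
  -- the FTC identity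
  have key : ∀ x : ℝ, deriv f x =
      f (x+1) - f x - ∫ t in x..(x+1), ((x+1-t : ℝ) : ℂ) * deriv (deriv f) t := by
    intro x
    have hderiv : ∀ t ∈ uIcc x (x+1),
        HasDerivAt (fun t => f t + ((x+1-t : ℝ) : ℂ) * deriv f t)
          (((x+1-t : ℝ) : ℂ) * deriv (deriv f) t) t := by
      intro t _
      have h1 : HasDerivAt f (deriv f t) t := (hdf t).hasDerivAt
      have h2' : HasDerivAt (deriv f) (deriv (deriv f) t) t := (hdf' t).hasDerivAt
      have h3 : HasDerivAt (fun t : ℝ => ((x+1-t : ℝ) : ℂ)) (-1 : ℂ) t := by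
        have : HasDerivAt (fun t : ℝ => (x+1-t : ℝ)) (-1 : ℝ) t := by
          simpa using (hasDerivAt_id t).const_sub (x+1)
        simpa using this.ofReal_comp
      have h4 : HasDerivAt (fun t : ℝ => ((x+1-t : ℝ) : ℂ) * deriv f t)
          ((-1) * deriv f t + ((x+1-t : ℝ) : ℂ) * deriv (deriv f) t) t := h3.mul h2'
      have := (h1.add h4 : HasDerivAt (fun t => f t + ((x+1-t : ℝ) : ℂ) * deriv f t) _ t)
      exact this.congr_deriv (by ring)
    have hint : IntervalIntegrable (fun t => ((x+1-t : ℝ) : ℂ) * deriv (deriv f) t)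
        volume x (x+1) := by
      apply Continuous.intervalIntegrable
      exact (Continuous.comp Complex.continuous_ofReal (by continuity)).mul hcont''
    have := intervalIntegral.integral_eq_sub_of_hasDerivAt hderiv hint
    rw [this]
    push_cast
    ring_nf
  -- pointwise bound
  have hbd : ∀ x : ℝ, ‖deriv f x‖ ≤
      ‖f (x+1)‖ + ‖f x‖ + ∫ t in x..(x+1), ‖deriv (deriv f) t‖ := by
    intro x
    have hle : x ≤ x + 1 := by linarith
    rw [key x]
    have hb : ‖∫ t in x..(x+1), ((x+1-t : ℝ) : ℂ) * deriv (deriv f) t‖ ≤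
        ∫ t in x..(x+1), ‖deriv (deriv f) t‖ := by
      calc ‖∫ t in x..(x+1), ((x+1-t : ℝ) : ℂ) * deriv (deriv f) t‖
          ≤ ∫ t in x..(x+1), ‖((x+1-t : ℝ) : ℂ) * deriv (deriv f) t‖ :=
            intervalIntegral.norm_integral_le_integral_norm hle
        _ ≤ ∫ t in x..(x+1), ‖deriv (deriv f) t‖ := by
            apply intervalIntegral.integral_mono_on hle
            · apply Continuous.intervalIntegrable
              exact ((Continuous.comp Complex.continuous_ofReal (by continuity)).mul hcont'').norm
            · exact hcont''.norm.intervalIntegrable _ _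
            · intro t ht
              rw [norm_mul]
              have : ‖((x+1-t : ℝ) : ℂ)‖ ≤ 1 := by
                rw [Complex.norm_real, Real.norm_eq_abs, abs_le]
                obtain ⟨ht1, ht2⟩ := ht
                constructor
                · linarith
                · linarith
              calc ‖((x+1-t : ℝ) : ℂ)‖ * ‖deriv (deriv f) t‖
                  ≤ 1 * ‖deriv (deriv f) t‖ :=
                    mul_le_mul_of_nonneg_right this (norm_nonneg _)
                _ = _ := one_mul _
    calc ‖f (x+1) - f x - _‖ ≤ ‖f (x+1) - f x‖ + ‖∫ t in x..(x+1), ((x+1-t : ℝ) : ℂ) * deriv (deriv f) t‖ :=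
          norm_sub_le _ _
      _ ≤ ‖f (x+1)‖ + ‖f x‖ + ∫ t in x..(x+1), ‖deriv (deriv f) t‖ := by
          have := norm_sub_le (f (x+1)) (f x)
          linarith
  -- majorant is in L2
  have hmaj : MemLp (fun x => ‖f (x+1)‖ + ‖f x‖ + ∫ t in x..(x+1), ‖deriv (deriv f) t‖)
      2 (volume : Measure ℝ) := by
    have ht : MemLp (fun x : ℝ => f (x+1)) 2 volume := by
      have hmp : MeasurePreserving (fun x : ℝ => x + 1) volume volume :=
        measurePreserving_add_right volume 1
      exact h0.comp_measurePreserving hmp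
    exact ((ht.norm.add h0.norm).add (avgL2 hcont'' h2))
  refine MemLp.of_le hmaj (hdf1.continuous.aestronglyMeasurable) ?_
  refine Filter.Eventually.of_forall fun x => ?_
  refine (hbd x).trans (le_abs_self _)

open Set intervalIntegral in
/-- If `ψ ∈ L²(ℝ)` solves `-ψ'' + Vψ = λψ` with `V` smooth and all
derivatives of `V` bounded, then every derivative `ψ^{(k)}` is in `L^∞(ℝ) ∩ L²(ℝ)`;
in particular `ψ` is bounded. -/
theorem l2_eigenfunction_derivatives_bounded
    (V : ℝ → ℂ) (hV : ContDiff ℝ (⊤ : ℕ∞) V)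
    (hVb : ∀ ℓ : ℕ, ∃ M : ℝ, ∀ x, ‖iteratedDeriv ℓ V x‖ ≤ M)
    (lam : ℂ) (ψ : ℝ → ℂ) (hψ : ContDiff ℝ 2 ψ)
    (heq : ∀ x, deriv (deriv ψ) x = (V x - lam) * ψ x)
    (hψ2 : MemLp ψ 2 volume) :
    ∀ k : ℕ, (∃ M : ℝ, ∀ x, ‖iteratedDeriv k ψ x‖ ≤ M) ∧
      MemLp (iteratedDeriv k ψ) 2 volume := by
  have hVs : ∀ n : ℕ, ContDiff ℝ (n : ℕ) V := fun n => hV.of_le (by exact_mod_cast le_top)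
  set W : ℝ → ℂ := fun x => V x - lam with hW
  have hWs : ∀ n : ℕ, ContDiff ℝ (n : ℕ) W := fun n => (hVs n).sub contDiff_const
  -- bootstrap smoothness
  have hstep : ∀ n : ℕ, ∀ f : ℝ → ℂ, ContDiff ℝ 2 f →
      ContDiff ℝ (n : ℕ) (deriv (deriv f)) → ContDiff ℝ ((n+2 : ℕ) : ℕ) f := by
    intro n f h2f hdd
    have hd : Differentiable ℝ f := h2f.differentiable (by norm_num)
    have hd' : Differentiable ℝ (deriv f) := by
      have := (contDiff_succ_iff_deriv (n := 1)).1 (by exact_mod_cast h2f)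
      exact this.2.2.differentiable (by norm_num)
    have c1 : ContDiff ℝ ((n : ℕ) + 1) (deriv f) :=
      contDiff_succ_iff_deriv.2 ⟨hd', by simp, hdd⟩
    have c2 : ContDiff ℝ (((n : ℕ) + 1) + 1) f :=
      contDiff_succ_iff_deriv.2 ⟨hd, by simp, c1⟩
    have : ((n + 2 : ℕ) : WithTop ℕ∞) = ((n : ℕ) : WithTop ℕ∞) + 1 + 1 := by push_cast; ring
    rwa [this]
  have hsm : ∀ n : ℕ, ContDiff ℝ ((n+2 : ℕ) : ℕ) ψ := by
    intro n
    induction n with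
    | zero => exact_mod_cast hψ
    | succ n ih =>
        have hdd : ContDiff ℝ (n+1 : ℕ) (deriv (deriv ψ)) := by
          have : deriv (deriv ψ) = fun x => W x * ψ x := by
            funext x; rw [heq x]
          rw [this]
          exact (hWs (n+1)).mul (ih.of_le (by exact_mod_cast (by omega : n+1 ≤ n+2)))
        exact hstep (n+1) ψ hψ hdd
  have hsmN : ∀ n : ℕ, ContDiff ℝ (n : ℕ) ψ := fun n =>
    (hsm n).of_le (by exact_mod_cast (by omega : n ≤ n+2))
  -- Leibniz identity
  have hleib : ∀ k : ℕ, iteratedDeriv (k+2) ψ = iteratedDeriv k (fun x => W x * ψ x) := by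
    intro k
    have h1 : deriv (deriv ψ) = fun x => W x * ψ x := by funext x; rw [heq x]
    rw [show k+2 = (k+1)+1 from rfl, iteratedDeriv_succ', iteratedDeriv_succ', h1]
  -- bounds on derivatives of W
  obtain ⟨M, hM⟩ := Classical.axiomOfChoice hVb
  have hMW : ∀ j : ℕ, ∀ x, ‖iteratedDeriv j W x‖ ≤ M j + ‖lam‖ := by
    intro j x
    match j with
    | 0 =>
      simp only [iteratedDeriv_zero, hW]
      calc ‖V x - lam‖ ≤ ‖V x‖ + ‖lam‖ := norm_sub_le _ _
        _ ≤ M 0 + ‖lam‖ := by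
            have := hM 0 x
            rw [iteratedDeriv_zero] at this
            linarith
    | (m+1) =>
      have : iteratedDeriv (m+1) W = iteratedDeriv (m+1) V := by
        have hdW : deriv W = deriv V := by
          funext y; exact deriv_sub_const (f := V) (c := lam)
        rw [iteratedDeriv_succ', iteratedDeriv_succ', hdW]
      rw [this]
      have := hM (m+1) x
      have hl : (0:ℝ) ≤ ‖lam‖ := norm_nonneg _
      linarith
  have hMWnn : ∀ j : ℕ, (0:ℝ) ≤ M j + ‖lam‖ :=
    fun j => le_trans (norm_nonneg _) (hMW j 0)
  -- product bound
  have hprod : ∀ k : ℕ, ∀ x : ℝ, ‖iteratedDeriv k (fun x => W x * ψ x) x‖ ≤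
      ∑ j ∈ Finset.range (k+1), (k.choose j : ℝ) * (M j + ‖lam‖) * ‖iteratedDeriv (k-j) ψ x‖ := by
    intro k x
    have h1 := norm_iteratedFDeriv_mul_le (𝕜 := ℝ) (hWs k) (hsmN k) x (le_refl (k : WithTop ℕ∞))
    rw [norm_iteratedFDeriv_eq_norm_iteratedDeriv] at h1
    refine h1.trans (Finset.sum_le_sum fun j hj => ?_)
    rw [norm_iteratedFDeriv_eq_norm_iteratedDeriv, norm_iteratedFDeriv_eq_norm_iteratedDeriv]
    have h2 := hMW j x
    have h3 : (0:ℝ) ≤ (k.choose j : ℝ) := Nat.cast_nonneg _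
    have h4 : (0:ℝ) ≤ ‖iteratedDeriv (k-j) ψ x‖ := norm_nonneg _
    exact mul_le_mul_of_nonneg_right (mul_le_mul_of_nonneg_left h2 h3) h4
  -- continuity of iterated derivs
  have hcontit : ∀ k : ℕ, Continuous (iteratedDeriv k ψ) := by
    intro k
    rw [iteratedDeriv_eq_iterate]
    exact (ContDiff.iterate_deriv' 0 k (by simpa using hsmN k)).continuous
  -- L2 membership for all k
  have hP : ∀ k : ℕ, MemLp (iteratedDeriv k ψ) 2 volume := by
    have step : ∀ k : ℕ, (∀ j, j ≤ k → MemLp (iteratedDeriv j ψ) 2 volume) →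
        MemLp (iteratedDeriv (k+2) ψ) 2 volume := by
      intro k ih
      rw [hleib k]
      have hmaj : MemLp (fun x => ∑ j ∈ Finset.range (k+1),
          (k.choose j : ℝ) * (M j + ‖lam‖) * ‖iteratedDeriv (k-j) ψ x‖) 2 volume := by
        exact memLp_finset_sum (Finset.range (k+1))
          (fun j hj => ((ih (k-j) (by omega)).norm.const_mul _))
      refine MemLp.of_le hmaj ?_ ?_
      · rw [← hleib k]; exact (hcontit (k+2)).aestronglyMeasurable
      · refine Filter.Eventually.of_forall fun x => ?_
        refine (hprod k x).trans (le_abs_self _)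
    intro k
    induction k using Nat.strong_induction_on with
    | _ k ih =>
      match k with
      | 0 => rw [iteratedDeriv_zero]; exact hψ2
      | 1 =>
        rw [iteratedDeriv_one]
        apply deriv_memL2 hψ hψ2
        have h2 : deriv (deriv ψ) = iteratedDeriv 2 ψ := by
          rw [show (2:ℕ) = 1+1 from rfl, iteratedDeriv_succ, iteratedDeriv_one]
        rw [h2]
        exact step 0 (fun j hj => by
          interval_cases j
          rw [iteratedDeriv_zero]; exact hψ2)
      | (k+2) => exact step k (fun j hj => ih j (by omega))
  -- conclusion
  intro k
  refine ⟨?_, hP k⟩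
  have h1 : ContDiff ℝ 1 (iteratedDeriv k ψ) := by
    rw [iteratedDeriv_eq_iterate]
    exact ContDiff.iterate_deriv' 1 k (by exact_mod_cast hsmN (1+k))
  have h2 : deriv (iteratedDeriv k ψ) = iteratedDeriv (k+1) ψ := (iteratedDeriv_succ).symm
  exact bdd_of_L2 h1 (hP k) (h2 ▸ hP (k+1))
end

section
/- For 1 ≤ p ≤ ∞: if h and its second derivative h'' both belong to L^p(ℝ), then h' ∈ L^p(ℝ). More generally, if h, h^{(k)} ∈ L^p(ℝ;dx), then h^{(ℓ)} ∈ L^p(ℝ;dx) for all ℓ = 1, …, k-1. -/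
/-!
Finite differences trade derivatives for translates. Write `Δ = Δ_[1]` and let
`A g x = ∫₀¹ ‖g (x + u)‖ du`; averaging translates against a probability measure is a
contraction of `Lᵖ` for `p ≥ 1` (Jensen, then Tonelli), so `g ∈ Lᵖ` gives `A g ∈ Lᵖ`.
By the mean value inequality, both `Δ f⁽ᵏ⁺¹⁾` and `f⁽ᵏ⁺¹⁾ - Δ f⁽ᵏ⁾` are pointwise dominated by
`A f⁽ᵏ⁺²⁾`. Hence if `f, f⁽ᵏ⁺²⁾ ∈ Lᵖ`, then `Δ f ∈ Lᵖ` and `(Δ f)⁽ᵏ⁺¹⁾ = Δ f⁽ᵏ⁺¹⁾ ∈ Lᵖ`, so by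
induction on `k` (applied to `Δ f`) `Δ f⁽ᵏ⁾ = (Δ f)⁽ᵏ⁾ ∈ Lᵖ`, and finally
`f⁽ᵏ⁺¹⁾ = (f⁽ᵏ⁺¹⁾ - Δ f⁽ᵏ⁾) + Δ f⁽ᵏ⁾ ∈ Lᵖ`. Descending from `k` gives all lower orders.
-/

open MeasureTheory Set
open scoped ENNReal fwdDiff

theorem rpow_lintegral_le_lintegral_rpow {α : Type*} [MeasurableSpace α] {μ : Measure α}
    [IsProbabilityMeasure μ] {F : α → ℝ≥0∞} (hF : AEMeasurable F μ) {q : ℝ} (hq : 1 ≤ q) :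
    (∫⁻ a, F a ∂μ) ^ q ≤ ∫⁻ a, F a ^ q ∂μ := by
  have hq0 : 0 < q := zero_lt_one.trans_le hq
  have h := eLpNorm_le_eLpNorm_of_exponent_le (μ := μ) (ENNReal.one_le_ofReal.2 hq)
    hF.aestronglyMeasurable
  rw [eLpNorm_one_eq_lintegral_enorm, eLpNorm_eq_lintegral_rpow_enorm_toReal
    (by positivity) ENNReal.ofReal_ne_top, ENNReal.toReal_ofReal hq0.le] at h
  simp only [enorm_eq_self] at h
  calc (∫⁻ a, F a ∂μ) ^ q ≤ ((∫⁻ a, F a ^ q ∂μ) ^ (1 / q)) ^ q := by gcongr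
    _ = ∫⁻ a, F a ^ q ∂μ := by
        rw [← ENNReal.rpow_mul, one_div_mul_cancel hq0.ne', ENNReal.rpow_one]

section

variable {E : Type*} [NormedAddCommGroup E] {p : ℝ≥0∞}

theorem eLpNorm_lintegral_enorm_comp_add_le {G : Type*} [MeasurableSpace G] [AddCommGroup G]
    [MeasurableAdd₂ G] {μ : Measure G} [SFinite μ] [μ.IsAddLeftInvariant] (hp : 1 ≤ p)
    {g : G → E} (hg : AEStronglyMeasurable g μ) (ν : Measure G) [IsProbabilityMeasure ν] :
    eLpNorm (fun x => ∫⁻ u, ‖g (x + u)‖ₑ ∂ν) p μ ≤ eLpNorm g p μ := by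
  have hadd : Measure.QuasiMeasurePreserving (fun z : G × G => z.1 + z.2) (μ.prod ν) μ := by
    simpa only [add_comm] using quasiMeasurePreserving_add_swap μ ν
  have hg_add : AEStronglyMeasurable (fun z : G × G => g (z.1 + z.2)) (μ.prod ν) :=
    hg.comp_quasiMeasurePreserving hadd
  rcases eq_or_ne p ∞ with rfl | hp_top
  · rw [eLpNorm_exponent_top, eLpNorm_exponent_top]
    refine eLpNormEssSup_le_of_ae_enorm_bound ?_
    have hbound : ∀ᵐ z ∂(μ.prod ν), ‖g (z.1 + z.2)‖ₑ ≤ eLpNormEssSup g μ :=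
      hadd.ae ae_le_eLpNormEssSup
    filter_upwards [Measure.ae_ae_of_ae_prod hbound] with x hx
    rw [enorm_eq_self]
    exact lintegral_le_const hx
  · have hp0 : p ≠ 0 := (zero_lt_one.trans_le hp).ne'
    have hq : 1 ≤ p.toReal := by simpa using ENNReal.toReal_mono hp_top hp
    rw [eLpNorm_eq_lintegral_rpow_enorm_toReal hp0 hp_top,
      eLpNorm_eq_lintegral_rpow_enorm_toReal hp0 hp_top]
    refine ENNReal.rpow_le_rpow ?_ (by positivity)
    simp only [enorm_eq_self]
    calc ∫⁻ x, (∫⁻ u, ‖g (x + u)‖ₑ ∂ν) ^ p.toReal ∂μ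
        ≤ ∫⁻ x, (∫⁻ u, ‖g (x + u)‖ₑ ^ p.toReal ∂ν) ∂μ := by
          refine lintegral_mono_ae ?_
          filter_upwards [hg_add.prodMk_left] with x hx
          exact rpow_lintegral_le_lintegral_rpow hx.enorm hq
      _ = ∫⁻ u, (∫⁻ x, ‖g (x + u)‖ₑ ^ p.toReal ∂μ) ∂ν :=
          lintegral_lintegral_swap (hg_add.enorm.pow_const _)
      _ = ∫⁻ x, ‖g x‖ₑ ^ p.toReal ∂μ := by
          simp only [lintegral_add_right_eq_self (μ := μ) (fun x => ‖g x‖ₑ ^ p.toReal),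
            lintegral_const, measure_univ, mul_one]

theorem MemLp.of_norm_le_integral_norm_comp_add {F : Type*} [NormedAddCommGroup F]
    {f : ℝ → F} {g : ℝ → E} (hp : 1 ≤ p) (hg : MemLp g p volume)
    (hf : AEStronglyMeasurable f volume) (hfg : ∀ x, ‖f x‖ ≤ ∫ u in (0 : ℝ)..1, ‖g (x + u)‖) :
    MemLp f p volume := by
  have : IsProbabilityMeasure (volume.restrict (Ioc (0 : ℝ) 1)) := ⟨by simp⟩
  refine ⟨hf, lt_of_le_of_lt ?_ hg.2⟩
  refine (eLpNorm_mono_enorm fun x => ?_).trans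
    (eLpNorm_lintegral_enorm_comp_add_le hp hg.1 (volume.restrict (Ioc (0 : ℝ) 1)))
  rw [enorm_eq_self]
  calc ‖f x‖ₑ ≤ ‖∫ u in Ioc (0 : ℝ) 1, ‖g (x + u)‖‖ₑ := by
        rw [← intervalIntegral.integral_of_le zero_le_one]
        exact enorm_le_iff_norm_le.2 (hfg x |>.trans (le_abs_self _))
    _ ≤ ∫⁻ u in Ioc (0 : ℝ) 1, ‖g (x + u)‖ₑ := by
        simpa only [enorm_norm] using enorm_integral_le_lintegral_enorm (fun u => ‖g (x + u)‖)

end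

theorem MemLp.fwdDiff {G E : Type*} [MeasurableSpace G] [AddCommGroup G] [MeasurableAdd G]
    [NormedAddCommGroup E] {μ : Measure G} [μ.IsAddRightInvariant] {p : ℝ≥0∞} {f : G → E}
    (hf : MemLp f p μ) (h : G) : MemLp (Δ_[h] f) p μ :=
  (hf.comp_measurePreserving (measurePreserving_add_right μ h)).sub hf

theorem ContDiff.fwdDiff {𝕜 F : Type*} [NontriviallyNormedField 𝕜] [NormedAddCommGroup F]
    [NormedSpace 𝕜 F] {n : WithTop ℕ∞} {f : 𝕜 → F} (hf : ContDiff 𝕜 n f) (h : 𝕜) :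
    ContDiff 𝕜 n (Δ_[h] f) :=
  (hf.comp (contDiff_id.add contDiff_const)).sub hf

theorem iteratedDeriv_fwdDiff {𝕜 F : Type*} [NontriviallyNormedField 𝕜] [NormedAddCommGroup F]
    [NormedSpace 𝕜 F] {n : ℕ} {f : 𝕜 → F} (hf : ContDiff 𝕜 n f) (h : 𝕜) :
    iteratedDeriv n (Δ_[h] f) = Δ_[h] (iteratedDeriv n f) := by
  funext x
  have hshift : ContDiff 𝕜 n fun z => f (z + h) := hf.comp (contDiff_id.add contDiff_const)
  rw [show Δ_[h] f = (fun z => f (z + h)) - f from rfl,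
    iteratedDeriv_sub hshift.contDiffAt hf.contDiffAt, iteratedDeriv_comp_add_const]
  rfl

section

variable {E : Type*} [NormedAddCommGroup E] [NormedSpace ℝ E]

theorem norm_sub_le_integral_norm_deriv_comp_add {φ : ℝ → E} (hφ : ContDiff ℝ 1 φ) (x : ℝ)
    {t : ℝ} (ht : t ∈ Icc (0 : ℝ) 1) :
    ‖φ (x + t) - φ x‖ ≤ ∫ u in (0 : ℝ)..1, ‖deriv φ (x + u)‖ := by
  have hB : Continuous fun u => ‖deriv φ (x + u)‖ :=
    ((hφ.continuous_deriv le_rfl).comp (continuous_const_add x)).norm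
  have hψ : Differentiable ℝ fun s => φ (x + s) :=
    (hφ.differentiable one_ne_zero).comp (differentiable_id.const_add x)
  calc ‖φ (x + t) - φ x‖ = ‖φ (x + t) - φ (x + 0)‖ := by rw [add_zero]
    _ ≤ ∫ u in (0 : ℝ)..t, ‖deriv φ (x + u)‖ := by
        refine norm_sub_le_integral_of_norm_deriv_le_of_le (f := fun s => φ (x + s)) ht.1
          hψ.continuous.continuousOn hψ.differentiableOn (ae_of_all _ fun u _ => ?_)
          (hB.intervalIntegrable _ _)
        rw [deriv_comp_const_add]
    _ ≤ ∫ u in (0 : ℝ)..1, ‖deriv φ (x + u)‖ :=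
        intervalIntegral.integral_mono_interval le_rfl ht.1 ht.2
          (ae_of_all _ fun _ => norm_nonneg _) (hB.intervalIntegrable _ _)

theorem norm_deriv_sub_fwdDiff_le {g : ℝ → E} (hg : ContDiff ℝ 2 g) (x : ℝ) :
    ‖deriv g x - Δ_[1] g x‖ ≤ ∫ u in (0 : ℝ)..1, ‖deriv (deriv g) (x + u)‖ := by
  have hderiv : ∀ s, HasDerivAt (fun s => g (x + s) - s • deriv g x)
      (deriv g (x + s) - deriv g x) s := by
    intro s
    have := ((hg.differentiable (by norm_num)) (x + s)).hasDerivAt.comp_const_add x s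
    simpa using this.fun_sub ((hasDerivAt_id s).smul_const (deriv g x))
  have := norm_image_sub_le_of_norm_deriv_le_segment_01'
    (fun s _ => (hderiv s).hasDerivWithinAt)
    (fun s hs => norm_sub_le_integral_norm_deriv_comp_add (hg.iterate_deriv' 1 1) x
      (Ico_subset_Icc_self hs))
  rw [norm_sub_rev]
  simpa [fwdDiff, sub_right_comm] using this

variable {p : ℝ≥0∞}

theorem memLp_iteratedDeriv_of_memLp_iteratedDeriv_succ (hp : 1 ≤ p) (k : ℕ) {f : ℝ → E}
    (hf : ContDiff ℝ (k + 1 : ℕ) f) (hf0 : MemLp f p volume)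
    (hfk : MemLp (iteratedDeriv (k + 1) f) p volume) :
    MemLp (iteratedDeriv k f) p volume := by
  induction k generalizing f with
  | zero => simpa using hf0
  | succ k ih =>
    have hsmooth : ∀ m i : ℕ, m + i ≤ k + 2 → ContDiff ℝ m (iteratedDeriv i f) := fun m i hmi => by
      rw [iteratedDeriv_eq_iterate]
      exact (hf.of_le (by exact_mod_cast hmi)).iterate_deriv' m i
    have hcomm : ∀ n ≤ k + 2, iteratedDeriv n (Δ_[1] f) = Δ_[1] (iteratedDeriv n f) :=
      fun n hn => iteratedDeriv_fwdDiff (hf.of_le (by exact_mod_cast hn)) 1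
    have hdiff_succ : MemLp (Δ_[1] (iteratedDeriv (k + 1) f)) p volume := by
      refine MemLp.of_norm_le_integral_norm_comp_add hp hfk
        ((hsmooth 0 (k + 1) (by omega)).fwdDiff 1).continuous.aestronglyMeasurable fun x => ?_
      simpa [fwdDiff, iteratedDeriv_succ] using norm_sub_le_integral_norm_deriv_comp_add
        (hsmooth 1 (k + 1) (by omega)) x (right_mem_Icc.2 zero_le_one)
    have hdiff : MemLp (Δ_[1] (iteratedDeriv k f)) p volume := by
      rw [← hcomm k (by omega)]
      refine ih ((hf.fwdDiff 1).of_le (by norm_cast; omega)) (MemLp.fwdDiff hf0 1) ?_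
      rwa [hcomm (k + 1) (by omega)]
    have herr : MemLp (iteratedDeriv (k + 1) f - Δ_[1] (iteratedDeriv k f)) p volume := by
      have hcont := (hsmooth 0 (k + 1) (by omega)).sub ((hsmooth 0 k (by omega)).fwdDiff 1)
      refine MemLp.of_norm_le_integral_norm_comp_add hp hfk
        hcont.continuous.aestronglyMeasurable fun x => ?_
      simpa [iteratedDeriv_succ] using norm_deriv_sub_fwdDiff_le (hsmooth 2 k (by omega)) x
    simpa using herr.add hdiff

theorem memLp_iteratedDeriv_of_le (hp : 1 ≤ p) {k : ℕ} {f : ℝ → E} (hf : ContDiff ℝ k f)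
    (hf0 : MemLp f p volume) (hfk : MemLp (iteratedDeriv k f) p volume) {ℓ : ℕ} (hℓ : ℓ ≤ k) :
    MemLp (iteratedDeriv ℓ f) p volume := by
  induction hℓ using Nat.decreasingInduction with
  | self => exact hfk
  | of_succ ℓ hℓk ih =>
    exact memLp_iteratedDeriv_of_memLp_iteratedDeriv_succ hp ℓ
      (hf.of_le (by exact_mod_cast hℓk)) hf0 ih

end

/-- Landau–Kolmogorov / intermediate derivatives: for `1 ≤ p ≤ ∞`,
if `h ∈ C^k(ℝ)` with `h, h^{(k)} ∈ L^p(ℝ)`, then `h^{(ℓ)} ∈ L^p(ℝ)` for all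
`ℓ = 1, …, k-1`. -/
theorem intermediate_derivatives_Lp
    (p : ENNReal) (hp : 1 ≤ p) (k : ℕ) (h : ℝ → ℂ)
    (hreg : ContDiff ℝ (k : ℕ∞) h)
    (hLp : MemLp h p volume)
    (hkLp : MemLp (iteratedDeriv k h) p volume) :
    ∀ ℓ : ℕ, 1 ≤ ℓ → ℓ ≤ k - 1 → MemLp (iteratedDeriv ℓ h) p volume := by
  intro ℓ _ hℓ
  exact memLp_iteratedDeriv_of_le hp hreg hLp hkLp (by omega)
end
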